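/- arXiv:hep-th/9304156 — 6 statements merged into one kernel-verified Lean document; each statement's English description precedes it below -/
import Mathlib

section
/- Let h : ℝ² → GLₙ(ℂ) have twice continuously differentiable entries and let X₊, X₋ be fixed n×n complex matrices. Define the connection components A₊ = h⁻¹ * ∂₊h + X₊ and A₋ = h⁻¹ * X₋ * h. Then the curvature F = ∂₊A₋ − ∂₋A₊ + [A₊, A₋] vanishes identically if and only if h satisfies the Toda equation ∂₋(h⁻¹ * ∂₊h) = [X₊, h⁻¹ * X₋ * h]. -/
open Filter Topology

/-- Light-cone partial derivative `∂₊` (in the first coordinate), taken entrywise,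
of a matrix-valued map on `ℝ²`. -/
noncomputable def dplus {n : ℕ} (h : ℝ × ℝ → Matrix (Fin n) (Fin n) ℂ) :
    ℝ × ℝ → Matrix (Fin n) (Fin n) ℂ :=
  fun p => Matrix.of fun i j => deriv (fun s => h (s, p.2) i j) p.1

/-- Light-cone partial derivative `∂₋` (in the second coordinate), taken entrywise,
of a matrix-valued map on `ℝ²`. -/
noncomputable def dminus {n : ℕ} (h : ℝ × ℝ → Matrix (Fin n) (Fin n) ℂ) :
    ℝ × ℝ → Matrix (Fin n) (Fin n) ℂ :=
  fun p => Matrix.of fun i j => deriv (fun s => h (p.1, s) i j) p.2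

/-!
Differentiating `h⁻¹ h = 1` gives `∂₊(h⁻¹) = -h⁻¹ (∂₊h) h⁻¹`, hence
`∂₊(h⁻¹X₋h) = [h⁻¹X₋h, h⁻¹∂₊h]`. Since also `∂₋X₊ = 0`, this term cancels the part
`[h⁻¹∂₊h, h⁻¹X₋h]` of the commutator `[A₊, A₋]`, and the curvature reduces to
`F = [X₊, h⁻¹X₋h] − ∂₋(h⁻¹∂₊h)`, whose vanishing is the Toda equation.
-/

section EntrywiseDeriv

variable {𝕜 : Type*} [NontriviallyNormedField 𝕜] {K : Type*} [NormedField K]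
  [NormedAlgebra 𝕜 K] {m : Type*}

noncomputable def entrywiseDeriv (g : 𝕜 → Matrix m m K) (t : 𝕜) : Matrix m m K :=
  Matrix.of fun i j => deriv (fun s => g s i j) t

def EntrywiseDifferentiableAt (g : 𝕜 → Matrix m m K) (t : 𝕜) : Prop :=
  ∀ i j, DifferentiableAt 𝕜 (fun s => g s i j) t

variable {f g : 𝕜 → Matrix m m K} {t : 𝕜}

theorem entrywiseDifferentiableAt_const (X : Matrix m m K) :
    EntrywiseDifferentiableAt (fun _ => X) t :=
  fun _ _ => differentiableAt_const _

theorem entrywiseDeriv_const (X : Matrix m m K) : entrywiseDeriv (fun _ => X) t = 0 := by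
  ext i j
  simp [entrywiseDeriv]

variable [Fintype m]

theorem EntrywiseDifferentiableAt.mul (hf : EntrywiseDifferentiableAt f t)
    (hg : EntrywiseDifferentiableAt g t) : EntrywiseDifferentiableAt (fun s => f s * g s) t :=
  fun i j => by
    simp only [Matrix.mul_apply]
    exact DifferentiableAt.fun_sum fun k _ => (hf i k).mul (hg k j)

theorem entrywiseDeriv_mul (hf : EntrywiseDifferentiableAt f t)
    (hg : EntrywiseDifferentiableAt g t) :
    entrywiseDeriv (fun s => f s * g s) t
      = entrywiseDeriv f t * g t + f t * entrywiseDeriv g t := by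
  ext i j
  simp only [entrywiseDeriv, Matrix.of_apply, Matrix.add_apply, Matrix.mul_apply,
    ← Finset.sum_add_distrib]
  rw [deriv_fun_sum (A := fun k s => f s i k * g s k j) fun k _ => (hf i k).mul (hg k j)]
  exact Finset.sum_congr rfl fun k _ => deriv_fun_mul (hf i k) (hg k j)

variable [DecidableEq m]

theorem EntrywiseDifferentiableAt.det (hg : EntrywiseDifferentiableAt g t) :
    DifferentiableAt 𝕜 (fun s => (g s).det) t := by
  simp only [Matrix.det_apply']
  exact DifferentiableAt.fun_sum fun σ _ =>
    (DifferentiableAt.fun_finsetProd fun i _ => hg (σ i) i).const_mul _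

theorem EntrywiseDifferentiableAt.eventually_isUnit (hg : EntrywiseDifferentiableAt g t)
    (hu : IsUnit (g t)) : ∀ᶠ s in 𝓝 t, IsUnit (g s) := by
  simp only [Matrix.isUnit_iff_isUnit_det, isUnit_iff_ne_zero] at hu ⊢
  exact hg.det.continuousAt.eventually_ne hu

theorem EntrywiseDifferentiableAt.inv (hg : EntrywiseDifferentiableAt g t)
    (hu : IsUnit (g t)) : EntrywiseDifferentiableAt (fun s => (g s)⁻¹) t := by
  intro i j
  simp only [Matrix.inv_def, Matrix.smul_apply, smul_eq_mul, Ring.inverse_eq_inv',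
    Matrix.adjugate_apply]
  refine (hg.det.inv ?_).mul (EntrywiseDifferentiableAt.det fun k l => ?_)
  · exact ((Matrix.isUnit_iff_isUnit_det _).mp hu).ne_zero
  · by_cases hkj : k = j
    · simp [Matrix.updateRow_apply, hkj]
    · simpa [Matrix.updateRow_apply, hkj] using hg k l

theorem entrywiseDeriv_inv (hg : EntrywiseDifferentiableAt g t) (hu : IsUnit (g t)) :
    entrywiseDeriv (fun s => (g s)⁻¹) t = -((g t)⁻¹ * entrywiseDeriv g t * (g t)⁻¹) := by
  have hinv_mul : (fun s => (g s)⁻¹ * g s) =ᶠ[𝓝 t] fun _ => 1 :=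
    (hg.eventually_isUnit hu).mono fun s hs =>
      Matrix.nonsing_inv_mul _ ((Matrix.isUnit_iff_isUnit_det _).mp hs)
  have hderiv :
      entrywiseDeriv (fun s => (g s)⁻¹) t * g t + (g t)⁻¹ * entrywiseDeriv g t = 0 := by
    rw [← entrywiseDeriv_mul (hg.inv hu) hg, ← entrywiseDeriv_const (1 : Matrix m m K) (t := t)]
    ext i j
    exact (hinv_mul.fun_comp fun M => M i j).deriv_eq
  calc entrywiseDeriv (fun s => (g s)⁻¹) t
      = entrywiseDeriv (fun s => (g s)⁻¹) t * g t * (g t)⁻¹ :=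
        (Matrix.mul_nonsing_inv_cancel_right _ _ ((Matrix.isUnit_iff_isUnit_det _).mp hu)).symm
    _ = -((g t)⁻¹ * entrywiseDeriv g t * (g t)⁻¹) := by
        rw [eq_neg_of_add_eq_zero_left hderiv]
        noncomm_ring

theorem entrywiseDeriv_conj (X : Matrix m m K) (hg : EntrywiseDifferentiableAt g t)
    (hu : IsUnit (g t)) :
    entrywiseDeriv (fun s => (g s)⁻¹ * X * g s) t
      = ⁅(g t)⁻¹ * X * g t, (g t)⁻¹ * entrywiseDeriv g t⁆ := by
  have hX := entrywiseDifferentiableAt_const (t := t) X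
  have hgg : g t * (g t)⁻¹ = 1 :=
    Matrix.mul_nonsing_inv _ ((Matrix.isUnit_iff_isUnit_det _).mp hu)
  rw [entrywiseDeriv_mul ((hg.inv hu).mul hX) hg, entrywiseDeriv_mul (hg.inv hu) hX,
    entrywiseDeriv_const, entrywiseDeriv_inv hg hu, Ring.lie_def]
  calc _ = -((g t)⁻¹ * entrywiseDeriv g t * (g t)⁻¹ * X * g t)
        + (g t)⁻¹ * X * (g t * (g t)⁻¹) * entrywiseDeriv g t := by
        rw [hgg]; noncomm_ring
    _ = _ := by noncomm_ring

end EntrywiseDeriv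

theorem dplus_conj {n : ℕ} {h : ℝ × ℝ → Matrix (Fin n) (Fin n) ℂ} {p : ℝ × ℝ}
    (X : Matrix (Fin n) (Fin n) ℂ) (hh : EntrywiseDifferentiableAt (fun s => h (s, p.2)) p.1)
    (hu : IsUnit (h p)) :
    dplus (fun q => (h q)⁻¹ * X * h q) p = ⁅(h p)⁻¹ * X * h p, (h p)⁻¹ * dplus h p⁆ :=
  entrywiseDeriv_conj X hh hu

theorem dminus_add_const {n : ℕ} (f : ℝ × ℝ → Matrix (Fin n) (Fin n) ℂ)
    (X : Matrix (Fin n) (Fin n) ℂ) : dminus (fun q => f q + X) = dminus f := by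
  ext p i j
  exact deriv_add_const _

theorem statement0_general {n : ℕ}
    (h : ℝ × ℝ → Matrix (Fin n) (Fin n) ℂ)
    (Xp Xm : Matrix (Fin n) (Fin n) ℂ)
    (hC2 : ∀ i j, ContDiff ℝ 2 fun p : ℝ × ℝ => h p i j)
    (hinv : ∀ p, IsUnit (h p)) :
    (∀ p : ℝ × ℝ,
        dplus (fun q => (h q)⁻¹ * Xm * h q) p
          - dminus (fun q => (h q)⁻¹ * dplus h q + Xp) p
          + (((h p)⁻¹ * dplus h p + Xp) * ((h p)⁻¹ * Xm * h p)
            - ((h p)⁻¹ * Xm * h p) * ((h p)⁻¹ * dplus h p + Xp)) = 0)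
      ↔ (∀ p : ℝ × ℝ,
          dminus (fun q => (h q)⁻¹ * dplus h q) p
            = Xp * ((h p)⁻¹ * Xm * h p) - (h p)⁻¹ * Xm * h p * Xp) := by
  have curvature_eq : ∀ p : ℝ × ℝ,
      dplus (fun q => (h q)⁻¹ * Xm * h q) p
          - dminus (fun q => (h q)⁻¹ * dplus h q + Xp) p
          + (((h p)⁻¹ * dplus h p + Xp) * ((h p)⁻¹ * Xm * h p)
            - ((h p)⁻¹ * Xm * h p) * ((h p)⁻¹ * dplus h p + Xp))
        = (Xp * ((h p)⁻¹ * Xm * h p) - (h p)⁻¹ * Xm * h p * Xp)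
          - dminus (fun q => (h q)⁻¹ * dplus h q) p := by
    intro p
    have hh : EntrywiseDifferentiableAt (fun s => h (s, p.2)) p.1 := fun i j =>
      ((hC2 i j).differentiable (by norm_num)).differentiableAt.comp p.1
        (differentiableAt_id.prodMk (differentiableAt_const _))
    rw [dplus_conj Xm hh (hinv p), dminus_add_const, Ring.lie_def]
    noncomm_ring
  exact forall_congr' fun p => by rw [curvature_eq, sub_eq_zero, eq_comm]

/-- For `A₊ = h⁻¹∂₊h + X₊` and `A₋ = h⁻¹X₋h`, the curvature
`F = ∂₊A₋ − ∂₋A₊ + [A₊, A₋]` vanishes identically iff `h` satisfies the Toda equation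
`∂₋(h⁻¹∂₊h) = [X₊, h⁻¹X₋h]`. -/
theorem statement0 {n : ℕ} (hn : 0 < n)
    (h : ℝ × ℝ → Matrix (Fin n) (Fin n) ℂ)
    (Xp Xm : Matrix (Fin n) (Fin n) ℂ)
    (hC2 : ∀ i j, ContDiff ℝ 2 fun p : ℝ × ℝ => h p i j)
    (hinv : ∀ p, IsUnit (h p)) :
    (∀ p : ℝ × ℝ,
        dplus (fun q => (h q)⁻¹ * Xm * h q) p
          - dminus (fun q => (h q)⁻¹ * dplus h q + Xp) p
          + (((h p)⁻¹ * dplus h p + Xp) * ((h p)⁻¹ * Xm * h p)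
            - ((h p)⁻¹ * Xm * h p) * ((h p)⁻¹ * dplus h p + Xp)) = 0)
      ↔ (∀ p : ℝ × ℝ,
          dminus (fun q => (h q)⁻¹ * dplus h q) p
            = Xp * ((h p)⁻¹ * Xm * h p) - (h p)⁻¹ * Xm * h p * Xp) :=
  statement0_general h Xp Xm hC2 hinv
end

section
/- Let h : ℝ² → GLₙ(ℂ) have twice continuously differentiable entries and let X₊, X₋ be fixed n×n complex matrices. Define the connection components A₊ = h * X₊ * h⁻¹ and A₋ = −(∂₋h) * h⁻¹ + X₋. Then the curvature F = ∂₊A₋ − ∂₋A₊ + [A₊, A₋] vanishes identically if and only if h satisfies ∂₊((∂₋h) * h⁻¹) = [h * X₊ * h⁻¹, X₋]. -/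
/-! With `J := (∂₋h) h⁻¹` and `A₊ = h X₊ h⁻¹`, the Leibniz rule and `∂₋(h⁻¹) = -h⁻¹ (∂₋h) h⁻¹`
give `∂₋A₊ = [J, A₊]`. This cancels the `J`-part `-[A₊, J]` of `[A₊, A₋]`, and since `X₋` is
constant, `F = -∂₊J + [A₊, X₋]`. -/

-- Matrices carry no global norm; the `L∞`-operator norm makes them a normed algebra, which is
-- what differentiating the inverse requires, and it induces the product topology.
attribute [local instance] Matrix.linftyOpNormedAddCommGroup Matrix.linftyOpNormedSpace
  Matrix.linftyOpNormedRing Matrix.linftyOpNormedAlgebra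

section MatrixCalculus

variable {m l 𝕜 : Type*} [Fintype m] [Fintype l] [RCLike 𝕜]

noncomputable def Matrix.linftyOpEquivPi : Matrix m l 𝕜 ≃L[ℝ] (m → l → 𝕜) :=
  { (Matrix.ofLinearEquiv ℝ).symm with
    continuous_toFun := continuous_id
    continuous_invFun := continuous_id }

theorem Matrix.hasDerivAt_iff_entries {f : ℝ → Matrix m l 𝕜} {D : Matrix m l 𝕜} {x : ℝ} :
    HasDerivAt f D x ↔ ∀ i j, HasDerivAt (fun s => f s i j) (D i j) x := by
  constructor
  · intro hf i j
    exact hasDerivAt_pi.1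
      (hasDerivAt_pi.1 (Matrix.linftyOpEquivPi.hasFDerivAt.comp_hasDerivAt x hf) i) j
  · intro hf
    exact Matrix.linftyOpEquivPi.symm.hasFDerivAt.comp_hasDerivAt x
      (hasDerivAt_pi.2 fun i => hasDerivAt_pi.2 fun j => hf i j)

variable [DecidableEq m]

theorem HasDerivAt.matrix_inv {f : ℝ → Matrix m m 𝕜} {f' : Matrix m m 𝕜} {x : ℝ}
    (hf : HasDerivAt f f' x) (hx : IsUnit (f x)) :
    HasDerivAt (fun s => (f s)⁻¹) (-((f x)⁻¹ * f' * (f x)⁻¹)) x := by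
  obtain ⟨u, hu⟩ := hx
  have hinv := hasFDerivAt_ringInverse (𝕜 := ℝ) u
  rw [hu] at hinv
  simp_rw [Matrix.nonsing_inv_eq_ringInverse, ← hu, Ring.inverse_unit]
  exact hinv.comp_hasDerivAt x hf

end MatrixCalculus

section LightCone

variable {n : ℕ}

theorem dminus_eq_of_hasDerivAt {f : ℝ × ℝ → Matrix (Fin n) (Fin n) ℂ} {p : ℝ × ℝ}
    {V : Matrix (Fin n) (Fin n) ℂ} (hf : HasDerivAt (fun s => f (p.1, s)) V p.2) :
    dminus f p = V := by
  ext i j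
  exact (Matrix.hasDerivAt_iff_entries.1 hf i j).deriv

theorem hasDerivAt_dminus {f : ℝ × ℝ → Matrix (Fin n) (Fin n) ℂ} {p : ℝ × ℝ}
    (hf : ∀ i j, DifferentiableAt ℝ (fun s => f (p.1, s) i j) p.2) :
    HasDerivAt (fun s => f (p.1, s)) (dminus f p) p.2 :=
  Matrix.hasDerivAt_iff_entries.2 fun i j => (hf i j).hasDerivAt

theorem dplus_neg_add_const (f : ℝ × ℝ → Matrix (Fin n) (Fin n) ℂ)
    (C : Matrix (Fin n) (Fin n) ℂ) (p : ℝ × ℝ) :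
    dplus (fun q => -f q + C) p = -dplus f p := by
  ext i j
  simp only [dplus, Matrix.of_apply, Matrix.neg_apply, Matrix.add_apply, deriv_add_const,
    deriv.fun_neg]

theorem dminus_conj {f : ℝ × ℝ → Matrix (Fin n) (Fin n) ℂ} {p : ℝ × ℝ}
    (hf : ∀ i j, DifferentiableAt ℝ (fun s => f (p.1, s) i j) p.2) (hu : IsUnit (f p))
    (X : Matrix (Fin n) (Fin n) ℂ) :
    dminus (fun q => f q * X * (f q)⁻¹) p
      = dminus f p * (f p)⁻¹ * (f p * X * (f p)⁻¹)
        - f p * X * (f p)⁻¹ * (dminus f p * (f p)⁻¹) := by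
  have hf' := hasDerivAt_dminus hf
  have hdet : IsUnit (f p).det := (Matrix.isUnit_iff_isUnit_det _).mp hu
  rw [dminus_eq_of_hasDerivAt ((hf'.mul_const X).mul (hf'.matrix_inv hu))]
  simp only [← mul_assoc, mul_neg, Matrix.nonsing_inv_mul_cancel_right _ _ hdet]
  abel

theorem curvature_eq_neg_dplus_add_commutator {h : ℝ × ℝ → Matrix (Fin n) (Fin n) ℂ}
    (Xp Xm : Matrix (Fin n) (Fin n) ℂ) {p : ℝ × ℝ}
    (hh : ∀ i j, DifferentiableAt ℝ (fun s => h (p.1, s) i j) p.2) (hu : IsUnit (h p)) :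
    dplus (fun q => -(dminus h q * (h q)⁻¹) + Xm) p
        - dminus (fun q => h q * Xp * (h q)⁻¹) p
        + ((h p * Xp * (h p)⁻¹) * (-(dminus h p * (h p)⁻¹) + Xm)
          - (-(dminus h p * (h p)⁻¹) + Xm) * (h p * Xp * (h p)⁻¹))
      = -dplus (fun q => dminus h q * (h q)⁻¹) p
        + ((h p * Xp * (h p)⁻¹) * Xm - Xm * (h p * Xp * (h p)⁻¹)) := by
  rw [dplus_neg_add_const, dminus_conj hh hu]
  noncomm_ring

end LightCone

theorem statement1_general {n : ℕ}
    (h : ℝ × ℝ → Matrix (Fin n) (Fin n) ℂ)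
    (Xp Xm : Matrix (Fin n) (Fin n) ℂ)
    (hC2 : ∀ i j, ContDiff ℝ 2 fun p : ℝ × ℝ => h p i j)
    (hinv : ∀ p, IsUnit (h p)) :
    (∀ p : ℝ × ℝ,
        dplus (fun q => -(dminus h q * (h q)⁻¹) + Xm) p
          - dminus (fun q => h q * Xp * (h q)⁻¹) p
          + ((h p * Xp * (h p)⁻¹) * (-(dminus h p * (h p)⁻¹) + Xm)
            - (-(dminus h p * (h p)⁻¹) + Xm) * (h p * Xp * (h p)⁻¹)) = 0)
      ↔ (∀ p : ℝ × ℝ,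
          dplus (fun q => dminus h q * (h q)⁻¹) p
            = (h p * Xp * (h p)⁻¹) * Xm - Xm * (h p * Xp * (h p)⁻¹)) := by
  have hdiff : ∀ (p : ℝ × ℝ) i j, DifferentiableAt ℝ (fun s => h (p.1, s) i j) p.2 :=
    fun p i j => ((hC2 i j).differentiable two_ne_zero).differentiableAt.comp p.2
      ((differentiableAt_const p.1).prodMk differentiableAt_id)
  refine forall_congr' fun p => ?_
  rw [curvature_eq_neg_dplus_add_commutator Xp Xm (hdiff p) (hinv p), neg_add_eq_zero]

/-- For `A₊ = h X₊ h⁻¹` and `A₋ = −(∂₋h) h⁻¹ + X₋`, the curvature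
`F = ∂₊A₋ − ∂₋A₊ + [A₊, A₋]` vanishes identically iff
`∂₊((∂₋h) h⁻¹) = [h X₊ h⁻¹, X₋]`. -/
theorem statement1 {n : ℕ} (hn : 0 < n)
    (h : ℝ × ℝ → Matrix (Fin n) (Fin n) ℂ)
    (Xp Xm : Matrix (Fin n) (Fin n) ℂ)
    (hC2 : ∀ i j, ContDiff ℝ 2 fun p : ℝ × ℝ => h p i j)
    (hinv : ∀ p, IsUnit (h p)) :
    (∀ p : ℝ × ℝ,
        dplus (fun q => -(dminus h q * (h q)⁻¹) + Xm) p
          - dminus (fun q => h q * Xp * (h q)⁻¹) p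
          + ((h p * Xp * (h p)⁻¹) * (-(dminus h p * (h p)⁻¹) + Xm)
            - (-(dminus h p * (h p)⁻¹) + Xm) * (h p * Xp * (h p)⁻¹)) = 0)
      ↔ (∀ p : ℝ × ℝ,
          dplus (fun q => dminus h q * (h q)⁻¹) p
            = (h p * Xp * (h p)⁻¹) * Xm - Xm * (h p * Xp * (h p)⁻¹)) :=
  statement1_general h Xp Xm hC2 hinv
end

section
/- Let u : ℝ² → GLₙ(ℂ) have continuously differentiable entries, let X₊, X₋ be fixed n×n complex matrices, and set h = u². Then the gauge transformation by u of the connection components A₊ = u⁻¹ * ∂₊u + u * X₊ * u⁻¹, A₋ = −(∂₋u) * u⁻¹ + u⁻¹ * X₋ * u, namely A_± ↦ u * A_± * u⁻¹ − (∂_±u) * u⁻¹, yields exactly the components A₊' = h * X₊ * h⁻¹ and A₋' = −(∂₋h) * h⁻¹ + X₋. -/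
namespace Matrix

variable {m R : Type*} [Fintype m] [DecidableEq m] [CommRing R]

theorem conj_inv_mul_add_conj_sub_eq_conj_sq {U : Matrix m m R} (hU : IsUnit U.det)
    (D X : Matrix m m R) :
    U * (U⁻¹ * D + U * X * U⁻¹) * U⁻¹ - D * U⁻¹ = U * U * X * (U * U)⁻¹ := by
  have hUU : U * U⁻¹ = 1 := mul_nonsing_inv U hU
  rw [mul_inv_rev]
  simp only [mul_add, add_mul, ← mul_assoc, hUU, one_mul]
  abel

theorem conj_neg_add_conj_sub_eq_leibniz_sq {U : Matrix m m R} (hU : IsUnit U.det)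
    (D X : Matrix m m R) :
    U * (-(D * U⁻¹) + U⁻¹ * X * U) * U⁻¹ - D * U⁻¹ = -((D * U + U * D) * (U * U)⁻¹) + X := by
  have hUU : U * U⁻¹ = 1 := mul_nonsing_inv U hU
  rw [mul_inv_rev]
  simp only [mul_add, add_mul, mul_neg, neg_mul, neg_add, ← mul_assoc, hUU, one_mul]
  simp only [mul_assoc, hUU, mul_one]
  abel

end Matrix

theorem dminus_mul {n : ℕ} {u v : ℝ × ℝ → Matrix (Fin n) (Fin n) ℂ} {p : ℝ × ℝ}
    (hu : ∀ i j, DifferentiableAt ℝ (fun s => u (p.1, s) i j) p.2)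
    (hv : ∀ i j, DifferentiableAt ℝ (fun s => v (p.1, s) i j) p.2) :
    dminus (fun q => u q * v q) p = dminus u p * v p + u p * dminus v p := by
  ext i j
  simp only [dminus, Matrix.of_apply, Matrix.add_apply, Matrix.mul_apply]
  rw [deriv_fun_sum (A := fun k s => u (p.1, s) i k * v (p.1, s) k j)
    fun k _ => (hu i k).mul (hv k j), ← Finset.sum_add_distrib]
  exact Finset.sum_congr rfl fun k _ => deriv_fun_mul (hu i k) (hv k j)

theorem differentiableAt_slice_snd {E : Type*} [NormedAddCommGroup E] [NormedSpace ℝ E]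
    {f : ℝ × ℝ → E} (hf : Differentiable ℝ f) (a s : ℝ) :
    DifferentiableAt ℝ (fun t => f (a, t)) s :=
  (hf.comp ((differentiable_const a).prodMk differentiable_id)).differentiableAt

theorem statement2_general {n : ℕ}
    (u : ℝ × ℝ → Matrix (Fin n) (Fin n) ℂ)
    (Xp Xm : Matrix (Fin n) (Fin n) ℂ)
    (hC1 : ∀ i j, ContDiff ℝ 1 fun p : ℝ × ℝ => u p i j)
    (hinv : ∀ p, IsUnit (u p))
    (h : ℝ × ℝ → Matrix (Fin n) (Fin n) ℂ)
    (hdef : ∀ p, h p = u p * u p) :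
    ∀ p : ℝ × ℝ,
      (u p * ((u p)⁻¹ * dplus u p + u p * Xp * (u p)⁻¹) * (u p)⁻¹
          - dplus u p * (u p)⁻¹ = h p * Xp * (h p)⁻¹)
      ∧ (u p * (-(dminus u p * (u p)⁻¹) + (u p)⁻¹ * Xm * u p) * (u p)⁻¹
          - dminus u p * (u p)⁻¹ = -(dminus h p * (h p)⁻¹) + Xm) := by
  intro p
  have hdet : IsUnit (u p).det := (Matrix.isUnit_iff_isUnit_det _).1 (hinv p)
  have hslice : ∀ i j, DifferentiableAt ℝ (fun s => u (p.1, s) i j) p.2 :=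
    fun i j => differentiableAt_slice_snd ((hC1 i j).differentiable one_ne_zero) p.1 p.2
  have hleibniz : dminus h p = dminus u p * u p + u p * dminus u p := by
    rw [show h = fun q => u q * u q from funext hdef]
    exact dminus_mul hslice hslice
  rw [hleibniz, hdef]
  exact ⟨Matrix.conj_inv_mul_add_conj_sub_eq_conj_sq hdet _ _,
    Matrix.conj_neg_add_conj_sub_eq_leibniz_sq hdet _ _⟩

/-- Gauge transforming the connection `A₊ = u⁻¹∂₊u + uX₊u⁻¹`, `A₋ = −(∂₋u)u⁻¹ + u⁻¹X₋u`
by `u` (i.e. `A_± ↦ u A_± u⁻¹ − (∂_±u)u⁻¹`) yields `A₊' = hX₊h⁻¹`,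
`A₋' = −(∂₋h)h⁻¹ + X₋`, where `h = u²`. -/
theorem statement2 {n : ℕ} (hn : 0 < n)
    (u : ℝ × ℝ → Matrix (Fin n) (Fin n) ℂ)
    (Xp Xm : Matrix (Fin n) (Fin n) ℂ)
    (hC1 : ∀ i j, ContDiff ℝ 1 fun p : ℝ × ℝ => u p i j)
    (hinv : ∀ p, IsUnit (u p))
    (h : ℝ × ℝ → Matrix (Fin n) (Fin n) ℂ)
    (hdef : ∀ p, h p = u p * u p) :
    ∀ p : ℝ × ℝ,
      (u p * ((u p)⁻¹ * dplus u p + u p * Xp * (u p)⁻¹) * (u p)⁻¹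
          - dplus u p * (u p)⁻¹ = h p * Xp * (h p)⁻¹)
      ∧ (u p * (-(dminus u p * (u p)⁻¹) + (u p)⁻¹ * Xm * u p) * (u p)⁻¹
          - dminus u p * (u p)⁻¹ = -(dminus h p * (h p)⁻¹) + Xm) :=
  statement2_general u Xp Xm hC1 hinv h hdef
end

section
/- Let h : ℝ² → GLₙ(ℂ) have three times continuously differentiable entries, let X₊, X₋, D be fixed n×n complex matrices with [D, X₊] = X₊ and D * h(x) = h(x) * D for all x, and suppose h satisfies the Toda equation ∂₋(h⁻¹ * ∂₊h) = [X₊, h⁻¹ * X₋ * h]. Then the quantity Θ₋₋ := Tr((h⁻¹ * ∂₋h)²) − 2 Tr(D * ∂₋(h⁻¹ * ∂₋h)) is anti-chiral: ∂₊Θ₋₋ = 0. -/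
/-!
Write `A = h⁻¹ ∂₊h`, `B = h⁻¹ ∂₋h` and `M = h⁻¹ X₋ h`. Flatness of the connection `h⁻¹ dh`
gives `∂₊B = ∂₋A + [B, A]`, the Toda equation says `∂₋A = [X₊, M]`, and `∂₋M = [M, B]`.
By cyclicity of the trace `Tr(B [B, A]) = 0`, so `∂₊ Tr(B²) = 2 Tr(B [X₊, M])`. On the other side
`∂₋∂₊B = [X₊, [M, B]] + [∂₋B, A] + [B, ∂₋A]`; as `D` commutes with `B` and `∂₋B` the last two
terms are invisible to `Tr(D ·)`, and `[D, X₊] = X₊` turns the first into `Tr(X₊ [M, B])`.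
Both contributions equal `Tr(X₊ M B − X₊ B M)`. Only the cyclicity of the trace enters, so the
argument works in any complete normed algebra carrying a continuous cyclic functional.
-/

open scoped Ring

section Calculus

variable {E F G : Type*} [NormedAddCommGroup E] [NormedSpace ℝ E] [NormedAddCommGroup F]
  [NormedSpace ℝ F] [NormedAddCommGroup G] [NormedSpace ℝ G]

theorem ContinuousLinearMap.fderiv_comp_apply (τ : F →L[ℝ] G) {f : E → F} {x : E}
    (hf : DifferentiableAt ℝ f x) (v : E) :
    fderiv ℝ (fun y => τ (f y)) x v = τ (fderiv ℝ f x v) := by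
  rw [fderiv_fun_comp x τ.differentiableAt hf, τ.fderiv]
  rfl

theorem differentiableAt_fderiv_apply {f : E → F} {x : E} (hf : ContDiffAt ℝ 2 f x) (v : E) :
    DifferentiableAt ℝ (fun y => fderiv ℝ f y v) x :=
  ((hf.fderiv_right (m := 1) le_rfl).differentiableAt one_ne_zero).clm_apply
    (differentiableAt_const v)

theorem fderiv_fderiv_apply_comm {f : E → F} {x : E} (hf : ContDiffAt ℝ 2 f x) (v w : E) :
    fderiv ℝ (fun y => fderiv ℝ f y w) x v = fderiv ℝ (fun y => fderiv ℝ f y v) x w := by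
  have hd : DifferentiableAt ℝ (fderiv ℝ f) x :=
    (hf.fderiv_right (m := 1) le_rfl).differentiableAt one_ne_zero
  rw [fderiv_clm_apply hd (differentiableAt_const _),
    fderiv_clm_apply hd (differentiableAt_const _)]
  simpa using hf.isSymmSndFDerivAt (by simp) v w

theorem DifferentiableAt.hasDerivAt_comp_mk_left {f : ℝ × ℝ → F} {p : ℝ × ℝ}
    (hf : DifferentiableAt ℝ f p) :
    HasDerivAt (fun s => f (s, p.2)) (fderiv ℝ f p (1, 0)) p.1 :=
  hf.hasFDerivAt.comp_hasDerivAt p.1 ((hasDerivAt_id p.1).prodMk (hasDerivAt_const p.1 p.2))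

theorem DifferentiableAt.hasDerivAt_comp_mk_right {f : ℝ × ℝ → F} {p : ℝ × ℝ}
    (hf : DifferentiableAt ℝ f p) :
    HasDerivAt (fun s => f (p.1, s)) (fderiv ℝ f p (0, 1)) p.2 :=
  hf.hasFDerivAt.comp_hasDerivAt p.2 ((hasDerivAt_const p.2 p.1).prodMk (hasDerivAt_id p.2))

end Calculus

section NormedAlgebra

variable {E R : Type*} [NormedAddCommGroup E] [NormedSpace ℝ E] [NormedRing R]
  [NormedAlgebra ℝ R] {f g : E → R} {x : E}

theorem fderiv_mul_apply (hf : DifferentiableAt ℝ f x) (hg : DifferentiableAt ℝ g x) (v : E) :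
    fderiv ℝ (fun y => f y * g y) x v = fderiv ℝ f x v * g x + f x * fderiv ℝ g x v := by
  rw [fderiv_fun_mul' hf hg]
  simp [add_comm]

theorem DifferentiableAt.lie (hf : DifferentiableAt ℝ f x) (hg : DifferentiableAt ℝ g x) :
    DifferentiableAt ℝ (fun y => ⁅f y, g y⁆) x := by
  simp only [Ring.lie_def]
  exact (hf.mul hg).sub (hg.mul hf)

theorem fderiv_lie_apply (hf : DifferentiableAt ℝ f x) (hg : DifferentiableAt ℝ g x) (v : E) :
    fderiv ℝ (fun y => ⁅f y, g y⁆) x v = ⁅fderiv ℝ f x v, g x⁆ + ⁅f x, fderiv ℝ g x v⁆ := by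
  simp only [Ring.lie_def]
  rw [fderiv_fun_sub (hf.fun_mul hg) (hg.fun_mul hf), sub_apply,
    fderiv_mul_apply hf hg, fderiv_mul_apply hg hf]
  noncomm_ring

theorem fderiv_ringInverse_apply [CompleteSpace R] (hf : DifferentiableAt ℝ f x)
    (hu : IsUnit (f x)) (v : E) :
    fderiv ℝ (fun y => (f y)⁻¹ʳ) x v = -((f x)⁻¹ʳ * fderiv ℝ f x v * (f x)⁻¹ʳ) := by
  obtain ⟨u, hu⟩ := hu
  have hinv : HasFDerivAt Ring.inverse (-ContinuousLinearMap.mulLeftRight ℝ R ↑u⁻¹ ↑u⁻¹) (f x) :=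
    hu ▸ hasFDerivAt_ringInverse u
  have hcomp : HasFDerivAt (fun y => (f y)⁻¹ʳ) _ x := hinv.comp x hf.hasFDerivAt
  rw [hcomp.fderiv, ← hu]
  simp

theorem Commute.fderiv_apply {d : R} (hf : ∀ y, Commute d (f y)) (x v : E) :
    Commute d (fderiv ℝ f x v) := by
  by_cases hd : DifferentiableAt ℝ f x
  · have hdf : (fun y => d * f y) = fun y => f y * d := funext fun y => (hf y).eq
    have := congrArg (fun φ => fderiv ℝ φ x v) hdf
    simpa [Commute, SemiconjBy, fderiv_const_mul hd, fderiv_mul_const' hd] using this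
  · simp [fderiv_zero_of_not_differentiableAt hd]

end NormedAlgebra

theorem Commute.ringInverse_right {M₀ : Type*} [MonoidWithZero M₀] {a b : M₀} (hab : Commute a b) :
    Commute a b⁻¹ʳ := by
  by_cases hb : IsUnit b
  · obtain ⟨u, rfl⟩ := hb
    simpa using hab.units_inv_right
  · simp [Ring.inverse_non_unit b hb]

section LeftLogDeriv

variable {E R : Type*} [NormedAddCommGroup E] [NormedSpace ℝ E] [NormedRing R]
  [NormedAlgebra ℝ R]

/-- The pullback `h⁻¹ dh` of the Maurer–Cartan form, evaluated on `v`. -/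
noncomputable def leftLogDeriv (h : E → R) (v x : E) : R := (h x)⁻¹ʳ * fderiv ℝ h x v

theorem Commute.leftLogDeriv {d : R} {h : E → R} (hd : ∀ y, Commute d (h y)) (v x : E) :
    Commute d (leftLogDeriv h v x) :=
  (hd x).ringInverse_right.mul_right (Commute.fderiv_apply hd x v)

variable [CompleteSpace R] {h : E → R} {x : E}

theorem contDiff_leftLogDeriv {m n : WithTop ℕ∞} (hh : ContDiff ℝ n h) (hmn : m + 1 ≤ n)
    (hu : ∀ y, IsUnit (h y)) (v : E) : ContDiff ℝ m (leftLogDeriv h v) := by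
  have hinv : ContDiff ℝ m fun y => (h y)⁻¹ʳ := by
    refine contDiff_iff_contDiffAt.2 fun y => ?_
    obtain ⟨u, hu⟩ := hu y
    exact (hu ▸ contDiffAt_ringInverse ℝ u).comp y
      ((hh.of_le (le_trans le_self_add hmn)).contDiffAt)
  exact hinv.mul ((hh.fderiv_right hmn).clm_apply contDiff_const)

/-- The zero-curvature equation: the connection `h⁻¹ dh` is flat. -/
theorem fderiv_leftLogDeriv_sub_fderiv_leftLogDeriv (hh : ContDiffAt ℝ 2 h x)
    (hu : IsUnit (h x)) (v w : E) :
    fderiv ℝ (leftLogDeriv h w) x v - fderiv ℝ (leftLogDeriv h v) x w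
      = ⁅leftLogDeriv h w x, leftLogDeriv h v x⁆ := by
  have hd : DifferentiableAt ℝ h x := hh.differentiableAt (by norm_num)
  have hid := hd.inverse hu
  unfold leftLogDeriv
  rw [fderiv_mul_apply hid (differentiableAt_fderiv_apply hh w),
    fderiv_mul_apply hid (differentiableAt_fderiv_apply hh v),
    fderiv_ringInverse_apply hd hu, fderiv_ringInverse_apply hd hu,
    fderiv_fderiv_apply_comm hh v w, Ring.lie_def]
  noncomm_ring

theorem fderiv_ringInverse_mul_mul_apply (hh : DifferentiableAt ℝ h x) (hu : IsUnit (h x))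
    (X : R) (v : E) :
    fderiv ℝ (fun y => (h y)⁻¹ʳ * X * h y) x v = ⁅(h x)⁻¹ʳ * X * h x, leftLogDeriv h v x⁆ := by
  have hid := hh.inverse hu
  rw [fderiv_mul_apply (hid.mul_const X) hh, fderiv_mul_apply hid (differentiableAt_const X),
    fderiv_const_apply, zero_apply, mul_zero, add_zero, fderiv_ringInverse_apply hh hu,
    Ring.lie_def, leftLogDeriv,
    show (h x)⁻¹ʳ * X * h x * ((h x)⁻¹ʳ * fderiv ℝ h x v) = (h x)⁻¹ʳ * X * fderiv ℝ h x v by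
      rw [mul_assoc _ (h x), Ring.mul_inverse_cancel_left _ _ hu]]
  noncomm_ring

end LeftLogDeriv

section CyclicFunctional

variable {R F G : Type*} [Ring R] [AddCommGroup F] [FunLike G R F] [AddMonoidHomClass G R F]
  {τ : G}

theorem map_lie_mul_of_cyclic (hτ : ∀ a b, τ (a * b) = τ (b * a)) (a b c : R) :
    τ (⁅a, b⁆ * c) = τ (a * ⁅b, c⁆) := by
  simp only [Ring.lie_def, sub_mul, mul_sub, map_sub, mul_assoc]
  rw [hτ b (a * c), mul_assoc]

theorem map_mul_lie_of_commute (hτ : ∀ a b, τ (a * b) = τ (b * a)) {d x : R}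
    (hdx : Commute d x) (y : R) : τ (d * ⁅x, y⁆) = 0 := by
  rw [← map_lie_mul_of_cyclic hτ, Ring.lie_def, hdx.eq, sub_self, zero_mul, map_zero]

theorem map_mul_lie_of_lie_eq_self (hτ : ∀ a b, τ (a * b) = τ (b * a)) {d x : R}
    (hdx : ⁅d, x⁆ = x) (y : R) : τ (d * ⁅x, y⁆) = τ (x * y) := by
  rw [← map_lie_mul_of_cyclic hτ, hdx]

/-- The left side is `τ(∂₊(B²))` and the right side `2 τ(D ∂₋∂₊B)`, once `∂₊B = [X₊, M] + [B, A]`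
and `∂₋M = [M, B]` are substituted (`l = B`, `l' = ∂₋B`, `a' = ∂₋A`). -/
theorem map_toda_identity (hτ : ∀ a b, τ (a * b) = τ (b * a)) {d xp m l a l' a' : R}
    (hd : ⁅d, xp⁆ = xp) (hl : Commute d l) (hl' : Commute d l') :
    τ ((⁅xp, m⁆ + ⁅l, a⁆) * l + l * (⁅xp, m⁆ + ⁅l, a⁆))
      = 2 • τ (d * (⁅xp, ⁅m, l⁆⁆ + ⁅l', a⁆ + ⁅l, a'⁆)) := by
  have hlhs : τ ((⁅xp, m⁆ + ⁅l, a⁆) * l + l * (⁅xp, m⁆ + ⁅l, a⁆)) = 2 • τ (l * ⁅xp, m⁆) := by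
    rw [map_add, hτ _ l, ← two_nsmul, mul_add, map_add,
      map_mul_lie_of_commute hτ (Commute.refl l), add_zero]
  have hrhs : τ (d * (⁅xp, ⁅m, l⁆⁆ + ⁅l', a⁆ + ⁅l, a'⁆)) = τ (xp * ⁅m, l⁆) := by
    rw [mul_add, mul_add, map_add, map_add, map_mul_lie_of_lie_eq_self hτ hd,
      map_mul_lie_of_commute hτ hl', map_mul_lie_of_commute hτ hl, add_zero, add_zero]
  rw [hlhs, hrhs, ← map_lie_mul_of_cyclic hτ xp m l, hτ ⁅xp, m⁆]

end CyclicFunctional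

section Toda

variable {E R F : Type*} [NormedAddCommGroup E] [NormedSpace ℝ E] [NormedRing R]
  [NormedAlgebra ℝ R] [NormedAddCommGroup F] [NormedSpace ℝ F]

/-- `Θ₋₋ = τ((h⁻¹∂₋h)²) − 2 τ(D ∂₋(h⁻¹∂₋h))`, with `∂₋` the derivative in the direction `w`. -/
noncomputable def todaTheta (τ : R →L[ℝ] F) (D : R) (h : E → R) (w x : E) : F :=
  τ (leftLogDeriv h w x * leftLogDeriv h w x) - 2 • τ (D * fderiv ℝ (leftLogDeriv h w) x w)

theorem fderiv_todaTheta_apply (τ : R →L[ℝ] F) (D : R) {h : E → R} {w x : E}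
    (hL : ContDiffAt ℝ 2 (leftLogDeriv h w) x) (v : E) :
    fderiv ℝ (todaTheta τ D h w) x v
      = τ (fderiv ℝ (leftLogDeriv h w) x v * leftLogDeriv h w x
          + leftLogDeriv h w x * fderiv ℝ (leftLogDeriv h w) x v)
        - 2 • τ (D * fderiv ℝ (fun y => fderiv ℝ (leftLogDeriv h w) y w) x v) := by
  set L := leftLogDeriv h w
  have hLx : DifferentiableAt ℝ L x := hL.differentiableAt (by norm_num)
  have hLw := differentiableAt_fderiv_apply hL w
  have hLL := hLx.fun_mul hLx
  have hDLw := hLw.const_mul D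
  have hτLL : DifferentiableAt ℝ (fun y => τ (L y * L y)) x := τ.differentiableAt.comp x hLL
  have hτDLw : DifferentiableAt ℝ (fun y => τ (D * fderiv ℝ L y w)) x :=
    τ.differentiableAt.comp x hDLw
  change fderiv ℝ (fun y => τ (L y * L y) - 2 • τ (D * fderiv ℝ L y w)) x v = _
  rw [fderiv_fun_sub hτLL (hτDLw.fun_const_smul 2), sub_apply, fderiv_fun_const_smul hτDLw,
    smul_apply, τ.fderiv_comp_apply hLL, τ.fderiv_comp_apply hDLw, fderiv_mul_apply hLx hLx,
    fderiv_const_mul hLw, smul_apply, smul_eq_mul]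

variable [CompleteSpace R]

theorem contDiff_todaTheta (τ : R →L[ℝ] F) (D : R) {h : E → R} (hh : ContDiff ℝ 3 h)
    (hu : ∀ y, IsUnit (h y)) (w : E) : ContDiff ℝ 1 (todaTheta τ D h w) := by
  have hL : ContDiff ℝ 2 (leftLogDeriv h w) := contDiff_leftLogDeriv hh (by norm_num) hu w
  have hLw : ContDiff ℝ 1 fun x => fderiv ℝ (leftLogDeriv h w) x w :=
    (hL.fderiv_right le_rfl).clm_apply contDiff_const
  exact (τ.contDiff.comp ((hL.of_le (by norm_num)).mul (hL.of_le (by norm_num)))).sub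
    ((τ.contDiff.comp (contDiff_const.mul hLw)).const_smul 2)

theorem fderiv_todaTheta_eq_zero {τ : R →L[ℝ] F} (hτ : ∀ a b, τ (a * b) = τ (b * a))
    {h : E → R} {Xp Xm D : R} {v w : E} (hh : ContDiff ℝ 3 h) (hu : ∀ y, IsUnit (h y))
    (hD : ⁅D, Xp⁆ = Xp) (hcomm : ∀ y, Commute D (h y))
    (htoda : ∀ y, fderiv ℝ (leftLogDeriv h v) y w = ⁅Xp, (h y)⁻¹ʳ * Xm * h y⁆) (x : E) :
    fderiv ℝ (todaTheta τ D h w) x v = 0 := by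
  set L := leftLogDeriv h w
  set A := leftLogDeriv h v
  set M := fun y => (h y)⁻¹ʳ * Xm * h y
  have hh' : Differentiable ℝ h := hh.differentiable (by norm_num)
  have hL : ContDiff ℝ 2 L := contDiff_leftLogDeriv hh (by norm_num) hu w
  have hLx : DifferentiableAt ℝ L x := hL.differentiable (by norm_num) x
  have hA : Differentiable ℝ A :=
    (contDiff_leftLogDeriv (m := 2) hh (by norm_num) hu v).differentiable (by norm_num)
  have hM : Differentiable ℝ M := ((hh'.inverse hu).mul_const Xm).mul hh'
  have hcurv : (fun y => fderiv ℝ L y v) = fun y => ⁅Xp, M y⁆ + ⁅L y, A y⁆ := funext fun y => by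
    rw [← htoda y]
    exact sub_eq_iff_eq_add'.1 (fderiv_leftLogDeriv_sub_fderiv_leftLogDeriv
      (hh.contDiffAt.of_le (by norm_num)) (hu y) v w)
  have hLwv : fderiv ℝ (fun y => fderiv ℝ L y w) x v
      = ⁅Xp, ⁅M x, L x⁆⁆ + ⁅fderiv ℝ L x w, A x⁆ + ⁅L x, ⁅Xp, M x⁆⁆ := by
    rw [fderiv_fderiv_apply_comm hL.contDiffAt, hcurv,
      fderiv_fun_add ((differentiableAt_const Xp).lie (hM x)) (hLx.lie (hA x)), add_apply,
      fderiv_lie_apply (differentiableAt_const Xp) (hM x), fderiv_lie_apply hLx (hA x),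
      fderiv_const_apply, zero_apply, Ring.lie_def 0, zero_mul, mul_zero, sub_zero, zero_add,
      htoda x, fderiv_ringInverse_mul_mul_apply (hh' x) (hu x), add_assoc]
  rw [fderiv_todaTheta_apply τ D hL.contDiffAt, hLwv, congrFun hcurv x,
    map_toda_identity hτ hD (Commute.leftLogDeriv hcomm w x)
      (Commute.fderiv_apply (Commute.leftLogDeriv hcomm w) x w), sub_self]

end Toda

section MatrixToda

-- Any norm would do; this one makes square matrices a complete normed `ℝ`-algebra.
attribute [local instance] Matrix.linftyOpNormedRing Matrix.linftyOpNormedAlgebra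

theorem contDiff_of_contDiff_entry {E ι : Type*} [NormedAddCommGroup E] [NormedSpace ℝ E]
    [Fintype ι] [DecidableEq ι] {k : WithTop ℕ∞} {F : E → Matrix ι ι ℂ}
    (hF : ∀ i j, ContDiff ℝ k fun x => F x i j) : ContDiff ℝ k F := by
  have hsum : F = fun x => ∑ i, ∑ j, F x i j • Matrix.single i j (1 : ℂ) := by
    funext x
    simp only [Matrix.smul_single, smul_eq_mul, mul_one]
    exact Matrix.matrix_eq_sum_single (F x)
  rw [hsum]
  exact ContDiff.sum fun i _ => ContDiff.sum fun j _ => (hF i j).smul contDiff_const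

theorem dplus_eq_lineDeriv {n : ℕ} {F : ℝ × ℝ → Matrix (Fin n) (Fin n) ℂ} (hF : ContDiff ℝ 1 F)
    (p : ℝ × ℝ) :
    dplus F p = lineDeriv ℝ F p (1, 0) := by
  have hd := hF.differentiable one_ne_zero p
  rw [hd.lineDeriv_eq_fderiv]
  ext i j
  exact ((Matrix.entryLinearMap ℝ ℂ i j).toContinuousLinearMap.hasFDerivAt.comp_hasDerivAt p.1
    hd.hasDerivAt_comp_mk_left).deriv

theorem dminus_eq_lineDeriv {n : ℕ} {F : ℝ × ℝ → Matrix (Fin n) (Fin n) ℂ} (hF : ContDiff ℝ 1 F)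
    (p : ℝ × ℝ) :
    dminus F p = lineDeriv ℝ F p (0, 1) := by
  have hd := hF.differentiable one_ne_zero p
  rw [hd.lineDeriv_eq_fderiv]
  ext i j
  exact ((Matrix.entryLinearMap ℝ ℂ i j).toContinuousLinearMap.hasFDerivAt.comp_hasDerivAt p.2
    hd.hasDerivAt_comp_mk_right).deriv

theorem inv_mul_dplus_eq_leftLogDeriv {n : ℕ} {h : ℝ × ℝ → Matrix (Fin n) (Fin n) ℂ}
    (hh : ContDiff ℝ 1 h) : (fun q => (h q)⁻¹ * dplus h q) = leftLogDeriv h (1, 0) :=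
  funext fun q => by
    rw [dplus_eq_lineDeriv hh, (hh.differentiable one_ne_zero q).lineDeriv_eq_fderiv,
      Matrix.nonsing_inv_eq_ringInverse]
    rfl

theorem inv_mul_dminus_eq_leftLogDeriv {n : ℕ} {h : ℝ × ℝ → Matrix (Fin n) (Fin n) ℂ}
    (hh : ContDiff ℝ 1 h) : (fun q => (h q)⁻¹ * dminus h q) = leftLogDeriv h (0, 1) :=
  funext fun q => by
    rw [dminus_eq_lineDeriv hh, (hh.differentiable one_ne_zero q).lineDeriv_eq_fderiv,
      Matrix.nonsing_inv_eq_ringInverse]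
    rfl

theorem statement9_general {n : ℕ}
    (h : ℝ × ℝ → Matrix (Fin n) (Fin n) ℂ)
    (Xp Xm D : Matrix (Fin n) (Fin n) ℂ)
    (hD : D * Xp - Xp * D = Xp)
    (hcomm : ∀ p, D * h p = h p * D)
    (hC3 : ∀ i j, ContDiff ℝ 3 fun p : ℝ × ℝ => h p i j)
    (hinv : ∀ p, IsUnit (h p))
    (htoda : ∀ p : ℝ × ℝ,
      dminus (fun q => (h q)⁻¹ * dplus h q) p
        = Xp * ((h p)⁻¹ * Xm * h p) - (h p)⁻¹ * Xm * h p * Xp)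
    (Θ : ℝ × ℝ → ℂ)
    (hΘ : ∀ p : ℝ × ℝ,
      Θ p = Matrix.trace (((h p)⁻¹ * dminus h p) * ((h p)⁻¹ * dminus h p))
        - 2 * Matrix.trace (D * dminus (fun q => (h q)⁻¹ * dminus h q) p)) :
    ∀ p : ℝ × ℝ, deriv (fun s => Θ (s, p.2)) p.1 = 0 := by
  have hh : ContDiff ℝ 3 h := contDiff_of_contDiff_entry hC3
  have hh1 : ContDiff ℝ 1 h := hh.of_le (by norm_num)
  have hL : ∀ v, ContDiff ℝ 1 (leftLogDeriv h v) := fun v =>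
    contDiff_leftLogDeriv hh (by norm_num) hinv v
  have hA := inv_mul_dplus_eq_leftLogDeriv hh1
  have hB := inv_mul_dminus_eq_leftLogDeriv hh1
  let τ := (Matrix.traceLinearMap (Fin n) ℝ ℂ).toContinuousLinearMap
  have hΘ' : Θ = todaTheta τ D h (0, 1) := funext fun q => by
    rw [hΘ q, congrFun hB q, hB, dminus_eq_lineDeriv (hL _),
      ((hL _).differentiable one_ne_zero q).lineDeriv_eq_fderiv]
    simp only [todaTheta, nsmul_eq_mul, Nat.cast_ofNat]
    rfl
  intro p
  rw [hΘ', ((contDiff_todaTheta τ D hh hinv (0, 1)).differentiable one_ne_zero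
    p).hasDerivAt_comp_mk_left.deriv]
  refine fderiv_todaTheta_eq_zero (Xm := Xm) Matrix.trace_mul_comm hh hinv
    (by rwa [Ring.lie_def]) hcomm (fun q => ?_) p
  rw [← ((hL _).differentiable one_ne_zero q).lineDeriv_eq_fderiv, ← dminus_eq_lineDeriv (hL _),
    ← hA, htoda q, Matrix.nonsing_inv_eq_ringInverse, Ring.lie_def]

/-- If `[D, X₊] = X₊`, `D` commutes with `h` everywhere, and `h` (three times
continuously differentiable) satisfies the Toda equation, then
`Θ₋₋ = Tr((h⁻¹∂₋h)²) − 2Tr(D ∂₋(h⁻¹∂₋h))` is anti-chiral: `∂₊Θ₋₋ = 0`. -/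
theorem statement9 {n : ℕ} (hn : 0 < n)
    (h : ℝ × ℝ → Matrix (Fin n) (Fin n) ℂ)
    (Xp Xm D : Matrix (Fin n) (Fin n) ℂ)
    (hD : D * Xp - Xp * D = Xp)
    (hcomm : ∀ p, D * h p = h p * D)
    (hC3 : ∀ i j, ContDiff ℝ 3 fun p : ℝ × ℝ => h p i j)
    (hinv : ∀ p, IsUnit (h p))
    (htoda : ∀ p : ℝ × ℝ,
      dminus (fun q => (h q)⁻¹ * dplus h q) p
        = Xp * ((h p)⁻¹ * Xm * h p) - (h p)⁻¹ * Xm * h p * Xp)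
    (Θ : ℝ × ℝ → ℂ)
    (hΘ : ∀ p : ℝ × ℝ,
      Θ p = Matrix.trace (((h p)⁻¹ * dminus h p) * ((h p)⁻¹ * dminus h p))
        - 2 * Matrix.trace (D * dminus (fun q => (h q)⁻¹ * dminus h q) p)) :
    ∀ p : ℝ × ℝ, deriv (fun s => Θ (s, p.2)) p.1 = 0 :=
  statement9_general h Xp Xm D hD hcomm hC3 hinv htoda Θ hΘ

end MatrixToda
end

section
/- Let A, F be n×n complex matrices and a ∈ ℂ with [A, F] = a • F. Then for every Q ∈ ℂ, exp(A) * exp(Q • F) * exp(−A) = exp((Q * exp a) • F). In particular conjugation of exp(QF) by exp(A) rescales the parameter Q by e^a. -/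
/-!
The relation `[A, F] = a • F` says `F * (A + a) = A * F`, so `F` intertwines
`exp (A + a) = eᵃ • exp A` with `exp A`, i.e. `exp A * F * exp (-A) = eᵃ • F`. Conjugation by
`exp A` is a ring automorphism, so it commutes with `exp` and sends `exp (Q • F)` to
`exp ((Q * eᵃ) • F)`.
-/

open NormedSpace

section BanachAlgebra

variable {𝕂 𝔸 : Type*} [RCLike 𝕂] [NormedRing 𝔸] [NormedAlgebra 𝕂 𝔸] [CompleteSpace 𝔸]

theorem exp_add_algebraMap (x : 𝔸) (c : 𝕂) : exp (x + algebraMap 𝕂 𝔸 c) = exp c • exp x := by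
  let +nondep : NormedAlgebra ℚ 𝔸 := .restrictScalars ℚ 𝕂 𝔸
  rw [exp_add_of_commute (Algebra.commutes c x).symm, ← algebraMap_exp_comm, Algebra.smul_def]
  exact (Algebra.commutes _ _).symm

theorem semiconjBy_exp_of_commutator_eq_smul {A F : 𝔸} {a : 𝕂} (h : A * F - F * A = a • F) :
    SemiconjBy (exp A) F (exp a • F) := by
  let +nondep : NormedAlgebra ℚ 𝔸 := .restrictScalars ℚ 𝕂 𝔸
  have hF : SemiconjBy F (A + algebraMap 𝕂 𝔸 a) A := by
    rw [SemiconjBy, mul_add, ← Algebra.commutes, ← Algebra.smul_def, ← h, add_sub_cancel]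
  have hexp := hF.exp_right
  rw [SemiconjBy, exp_add_algebraMap, mul_smul_comm] at hexp
  rw [SemiconjBy, smul_mul_assoc, hexp]

theorem exp_mul_exp_smul_mul_exp_neg_of_commutator_eq_smul {A F : 𝔸} {a : 𝕂}
    (h : A * F - F * A = a • F) (Q : 𝕂) :
    exp A * exp (Q • F) * exp (-A) = exp ((Q * exp a) • F) := by
  let +nondep : NormedAlgebra ℚ 𝔸 := .restrictScalars ℚ 𝕂 𝔸
  have hQF : SemiconjBy (exp A) (Q • F) ((Q * exp a) • F) := by
    simpa only [mul_smul] using (semiconjBy_exp_of_commutator_eq_smul h).smul_right Q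
  rw [hQF.exp_right.eq, mul_assoc, ← exp_add_of_commute (Commute.refl A).neg_right,
    add_neg_cancel, exp_zero, mul_one]

end BanachAlgebra

attribute [local instance] Matrix.linftyOpNormedRing Matrix.linftyOpNormedAlgebra

open NormedSpace in
theorem statement11_general {n : ℕ}
    (A F : Matrix (Fin n) (Fin n) ℂ) (a : ℂ)
    (hAF : A * F - F * A = a • F) :
    ∀ Q : ℂ,
      exp A * exp (Q • F) * exp (-A)
        = exp ((Q * Complex.exp a) • F) := by
  rw [Complex.exp_eq_exp_ℂ]
  exact exp_mul_exp_smul_mul_exp_neg_of_commutator_eq_smul hAF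

open NormedSpace in
/-- If `[A, F] = a • F`, then `exp(A) exp(Q•F) exp(−A) = exp((Q e^a) • F)` for all `Q`:
conjugating `exp(QF)` by `exp(A)` rescales `Q` by `e^a`. -/
theorem statement11 {n : ℕ} (hn : 0 < n)
    (A F : Matrix (Fin n) (Fin n) ℂ) (a : ℂ)
    (hAF : A * F - F * A = a • F) :
    ∀ Q : ℂ,
      exp A * exp (Q • F) * exp (-A)
        = exp ((Q * Complex.exp a) • F) :=
  statement11_general A F a hAF
end

section
/- Let L be a finite-dimensional Lie algebra over a field K with a nondegenerate invariant symmetric bilinear form B (invariance: B(⁅z,x⁆, y) + B(x, ⁅z,y⁆) = 0 for all x, y, z), and let V be a finite-dimensional L-module with action ρ : L → End(V) a Lie algebra homomorphism. Fix X ∈ L and n ∈ ℕ, and suppose c ∈ L satisfies B(c, z) = trace(ρ(X)ⁿ ∘ ρ(z)) for all z ∈ L. Then ⁅X, c⁆ = 0 and, for every y ∈ L with ⁅y, X⁆ = 0, one has ⁅y, c⁆ = 0; that is, c lies in the centre of the centralizer of X in L. -/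
/-
Since `y` commutes with `X`, `ρ(y)` commutes with `ρ(X)ⁿ`, so
`tr(ρ(X)ⁿ ρ⁅y, z⁆) = tr(⁅ρ(X)ⁿ, ρ(y)⁆ ρ(z)) = 0`. By invariance `B(⁅y, c⁆, z) = -B(c, ⁅y, z⁆) = 0`
for all `z`, and nondegeneracy gives `⁅y, c⁆ = 0`. Taking `y = X` gives `⁅X, c⁆ = 0`.
-/

attribute [local instance 100] LieRing.ofAssociativeRing

theorem LinearMap.trace_mul_lie_eq_zero_of_commute {R M : Type*} [CommRing R] [AddCommGroup M]
    [Module R M] {A f : Module.End R M} (h : Commute A f) (g : Module.End R M) :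
    trace R M (A * ⁅f, g⁆) = 0 := by
  rw [← trace_lie_mul_eq, commute_iff_lie_eq.mp h, zero_mul, map_zero]

theorem lie_eq_zero_of_forall_apply_lie_eq_zero {K L : Type*} [CommRing K] [LieRing L]
    [LieAlgebra K L] (B : L →ₗ[K] L →ₗ[K] K) (hinv : ∀ x y z : L, B ⁅z, x⁆ y + B x ⁅z, y⁆ = 0)
    (hnd : ∀ c : L, (∀ z : L, B c z = 0) → c = 0) {y c : L} (h : ∀ z : L, B c ⁅y, z⁆ = 0) :
    ⁅y, c⁆ = 0 :=
  hnd _ fun z => by linear_combination hinv c z y - h z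

theorem statement13_general {K L V : Type*} [Field K]
    [LieRing L] [LieAlgebra K L]
    [AddCommGroup V] [Module K V]
    (B : L →ₗ[K] L →ₗ[K] K)
    (hinv : ∀ x y z : L, B ⁅z, x⁆ y + B x ⁅z, y⁆ = 0)
    (hnd : ∀ c : L, (∀ z : L, B c z = 0) → c = 0)
    (ρ : L →ₗ⁅K⁆ Module.End K V)
    (X c : L) (n : ℕ)
    (hc : ∀ z : L, B c z = LinearMap.trace K V ((ρ X) ^ n * ρ z)) :
    ⁅X, c⁆ = 0 ∧ ∀ y : L, ⁅y, X⁆ = 0 → ⁅y, c⁆ = 0 := by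
  have centralizes : ∀ y : L, ⁅y, X⁆ = 0 → ⁅y, c⁆ = 0 := fun y hy => by
    have hcomm : Commute (ρ X ^ n) (ρ y) :=
      ((commute_iff_lie_eq.mpr (by rw [← LieHom.map_lie, hy, map_zero])).pow_right n).symm
    refine lie_eq_zero_of_forall_apply_lie_eq_zero B hinv hnd fun z => ?_
    rw [hc, LieHom.map_lie, LinearMap.trace_mul_lie_eq_zero_of_commute hcomm]
  exact ⟨centralizes X (lie_self X), centralizes⟩

/-- Let `B` be a nondegenerate invariant symmetric bilinear form on a
finite-dimensional Lie algebra `L`, `ρ : L → End(V)` a finite-dimensional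
representation, and suppose `c` satisfies `B(c, z) = tr(ρ(X)ⁿ ρ(z))` for all `z`.
Then `c` lies in the centre of the centralizer of `X`: `⁅X, c⁆ = 0` and
`⁅y, c⁆ = 0` for every `y` with `⁅y, X⁆ = 0`. -/
theorem statement13 {K L V : Type*} [Field K]
    [LieRing L] [LieAlgebra K L] [Module.Finite K L]
    [AddCommGroup V] [Module K V] [Module.Finite K V]
    (B : L →ₗ[K] L →ₗ[K] K)
    (hsymm : ∀ x y : L, B x y = B y x)
    (hinv : ∀ x y z : L, B ⁅z, x⁆ y + B x ⁅z, y⁆ = 0)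
    (hnd : ∀ c : L, (∀ z : L, B c z = 0) → c = 0)
    (ρ : L →ₗ⁅K⁆ Module.End K V)
    (X c : L) (n : ℕ)
    (hc : ∀ z : L, B c z = LinearMap.trace K V ((ρ X) ^ n * ρ z)) :
    ⁅X, c⁆ = 0 ∧ ∀ y : L, ⁅y, X⁆ = 0 → ⁅y, c⁆ = 0 :=
  statement13_general B hinv hnd ρ X c n hc
end
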